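/- arXiv:0905.0812 — 2 statements merged into one kernel-verified Lean document; each statement's English description precedes it below -/
import Mathlib

section
/- Let p : ℕ → [1,∞]. The functional Φ_p is a norm on the vector space ℓ^{p(·)} = {x ∈ ℓ^∞ : Φ_p(x) < ∞}: for all x, y ∈ ℓ^{p(·)} and scalars λ ∈ ℝ one has Φ_p(x + y) ≤ Φ_p(x) + Φ_p(y), Φ_p(λx) = |λ|·Φ_p(x), and Φ_p(x) = 0 if and only if x = 0. -/
open scoped ENNReal

/-- `t ⊞_p s`: for `p < ∞`, `(t^p + s^p)^(1/p)`; for `p = ∞`, `max t s`. -/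
noncomputable def boxPlus (p : ℝ≥0∞) (t s : ℝ) : ℝ :=
  if p = ∞ then max t s else (t ^ p.toReal + s ^ p.toReal) ^ (1 / p.toReal)

/-- The recursively defined seminorms `|||x|||_(k)` (0-indexed). -/
noncomputable def seqNorm (p : ℕ → ℝ≥0∞) (x : ℕ → ℝ) : ℕ → ℝ
  | 0 => boxPlus (p 0) |x 0| |x 1|
  | k + 1 => boxPlus (p (k + 1)) (seqNorm p x k) |x (k + 2)|

/-- `Φ_p(x) = lim_k |||x|||_(k)`, as the supremum of the nondecreasing sequence. -/
noncomputable def Phi (p : ℕ → ℝ≥0∞) (x : ℕ → ℝ) : ℝ≥0∞ :=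
  ⨆ k, ENNReal.ofReal (seqNorm p x k)

/-- `x` is a bounded real sequence, i.e. `x ∈ ℓ^∞`. -/
def IsBddSeq (x : ℕ → ℝ) : Prop := ∃ M : ℝ, ∀ n, |x n| ≤ M

/-- Membership in the variable exponent space `ℓ^{p(·)}`. -/
def MemVLp (p : ℕ → ℝ≥0∞) (x : ℕ → ℝ) : Prop := IsBddSeq x ∧ Phi p x < ⊤

/-!
Each operation `⊞_q` with `q ≥ 1` is, on nonnegative reals, monotone, positively homogeneous and
subadditive in the pair of its arguments (Minkowski's inequality for two terms). By induction these
properties pass to every `|||·|||_(k)`, and then to their supremum `Φ_p`. Definiteness holds because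
`|x_n| ≤ |||x|||_(n)`.
-/

section BoxPlus

variable {q : ℝ≥0∞} {t s t' s' : ℝ}

lemma boxPlus_comm (q : ℝ≥0∞) (t s : ℝ) : boxPlus q t s = boxPlus q s t := by
  simp only [boxPlus, max_comm, add_comm]

lemma boxPlus_nonneg (ht : 0 ≤ t) (hs : 0 ≤ s) : 0 ≤ boxPlus q t s := by
  unfold boxPlus
  split_ifs
  · exact le_max_of_le_left ht
  · positivity

lemma le_boxPlus_left (hq : q ≠ 0) (ht : 0 ≤ t) (hs : 0 ≤ s) : t ≤ boxPlus q t s := by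
  unfold boxPlus
  split_ifs with hq_top
  · exact le_max_left _ _
  · have hq_pos : 0 < q.toReal := ENNReal.toReal_pos hq hq_top
    calc t = (t ^ q.toReal) ^ (1 / q.toReal) := by
            rw [← Real.rpow_mul ht, mul_one_div_cancel hq_pos.ne', Real.rpow_one]
      _ ≤ (t ^ q.toReal + s ^ q.toReal) ^ (1 / q.toReal) := by
            gcongr
            exact le_add_of_nonneg_right (by positivity)

lemma le_boxPlus_right (hq : q ≠ 0) (ht : 0 ≤ t) (hs : 0 ≤ s) : s ≤ boxPlus q t s :=
  boxPlus_comm q t s ▸ le_boxPlus_left hq hs ht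

lemma boxPlus_le_boxPlus (ht : 0 ≤ t) (hs : 0 ≤ s) (htt : t ≤ t') (hss : s ≤ s') :
    boxPlus q t s ≤ boxPlus q t' s' := by
  unfold boxPlus
  split_ifs
  · exact max_le_max htt hss
  · gcongr

lemma boxPlus_add_add_le (hq : 1 ≤ q) (ht : 0 ≤ t) (hs : 0 ≤ s) (ht' : 0 ≤ t') (hs' : 0 ≤ s') :
    boxPlus q (t + t') (s + s') ≤ boxPlus q t s + boxPlus q t' s' := by
  unfold boxPlus
  split_ifs with hq_top
  · exact max_le (add_le_add (le_max_left _ _) (le_max_left _ _))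
      (add_le_add (le_max_right _ _) (le_max_right _ _))
  · have hq_real : 1 ≤ q.toReal := by
      simpa using ENNReal.toReal_mono hq_top hq
    simpa [Fin.sum_univ_two] using
      Real.Lp_add_le_of_nonneg Finset.univ hq_real (f := ![t, s]) (g := ![t', s'])
        (by simp [Fin.forall_fin_two, ht, hs]) (by simp [Fin.forall_fin_two, ht', hs'])

lemma mul_boxPlus (hq : q ≠ 0) (ht : 0 ≤ t) (hs : 0 ≤ s) {c : ℝ} (hc : 0 ≤ c) :
    c * boxPlus q t s = boxPlus q (c * t) (c * s) := by
  unfold boxPlus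
  split_ifs with hq_top
  · exact mul_max_of_nonneg t s hc
  · have hq_pos : 0 < q.toReal := ENNReal.toReal_pos hq hq_top
    rw [Real.mul_rpow hc ht, Real.mul_rpow hc hs, ← mul_add,
      Real.mul_rpow (by positivity) (by positivity), ← Real.rpow_mul hc,
      mul_one_div_cancel hq_pos.ne', Real.rpow_one]

end BoxPlus

section SeqNorm

variable {p : ℕ → ℝ≥0∞} {x y : ℕ → ℝ}

lemma seqNorm_nonneg (p : ℕ → ℝ≥0∞) (x : ℕ → ℝ) (k : ℕ) : 0 ≤ seqNorm p x k := by
  induction k with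
  | zero => exact boxPlus_nonneg (abs_nonneg _) (abs_nonneg _)
  | succ k ih => exact boxPlus_nonneg ih (abs_nonneg _)

lemma abs_le_seqNorm (hp : ∀ n, p n ≠ 0) {n k : ℕ} (hn : n ≤ k + 1) :
    |x n| ≤ seqNorm p x k := by
  induction k with
  | zero =>
    interval_cases n
    · exact le_boxPlus_left (hp 0) (abs_nonneg _) (abs_nonneg _)
    · exact le_boxPlus_right (hp 0) (abs_nonneg _) (abs_nonneg _)
  | succ k ih =>
    obtain hn | rfl : n ≤ k + 1 ∨ n = k + 2 := by omega
    · exact (ih hn).trans (le_boxPlus_left (hp _) (seqNorm_nonneg p x k) (abs_nonneg _))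
    · exact le_boxPlus_right (hp _) (seqNorm_nonneg p x k) (abs_nonneg _)

lemma seqNorm_add_le (hp : ∀ n, 1 ≤ p n) (k : ℕ) :
    seqNorm p (x + y) k ≤ seqNorm p x k + seqNorm p y k := by
  induction k with
  | zero =>
    calc seqNorm p (x + y) 0 = boxPlus (p 0) |x 0 + y 0| |x 1 + y 1| := rfl
      _ ≤ boxPlus (p 0) (|x 0| + |y 0|) (|x 1| + |y 1|) :=
          boxPlus_le_boxPlus (abs_nonneg _) (abs_nonneg _) (abs_add_le _ _) (abs_add_le _ _)
      _ ≤ _ := boxPlus_add_add_le (hp 0) (abs_nonneg _) (abs_nonneg _) (abs_nonneg _)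
          (abs_nonneg _)
  | succ k ih =>
    calc seqNorm p (x + y) (k + 1)
        = boxPlus (p (k + 1)) (seqNorm p (x + y) k) |x (k + 2) + y (k + 2)| := rfl
      _ ≤ boxPlus (p (k + 1)) (seqNorm p x k + seqNorm p y k) (|x (k + 2)| + |y (k + 2)|) :=
          boxPlus_le_boxPlus (seqNorm_nonneg p _ k) (abs_nonneg _) ih (abs_add_le _ _)
      _ ≤ _ := boxPlus_add_add_le (hp _) (seqNorm_nonneg p x k) (abs_nonneg _)
          (seqNorm_nonneg p y k) (abs_nonneg _)

lemma seqNorm_smul (hp : ∀ n, p n ≠ 0) (l : ℝ) (k : ℕ) :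
    seqNorm p (l • x) k = |l| * seqNorm p x k := by
  induction k with
  | zero =>
    change boxPlus (p 0) |l * x 0| |l * x 1| = |l| * boxPlus (p 0) |x 0| |x 1|
    rw [abs_mul, abs_mul, mul_boxPlus (hp 0) (abs_nonneg _) (abs_nonneg _) (abs_nonneg l)]
  | succ k ih =>
    change boxPlus (p (k + 1)) (seqNorm p (l • x) k) |l * x (k + 2)|
        = |l| * boxPlus (p (k + 1)) (seqNorm p x k) |x (k + 2)|
    rw [ih, abs_mul, mul_boxPlus (hp _) (seqNorm_nonneg p x k) (abs_nonneg _) (abs_nonneg l)]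

end SeqNorm

section Phi

variable {p : ℕ → ℝ≥0∞}

lemma Phi_add_le (hp : ∀ n, 1 ≤ p n) (x y : ℕ → ℝ) : Phi p (x + y) ≤ Phi p x + Phi p y :=
  iSup_le fun k =>
    calc ENNReal.ofReal (seqNorm p (x + y) k)
        ≤ ENNReal.ofReal (seqNorm p x k) + ENNReal.ofReal (seqNorm p y k) :=
          (ENNReal.ofReal_le_ofReal (seqNorm_add_le hp k)).trans ENNReal.ofReal_add_le
      _ ≤ Phi p x + Phi p y := add_le_add (le_iSup_of_le k le_rfl) (le_iSup_of_le k le_rfl)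

lemma Phi_smul (hp : ∀ n, p n ≠ 0) (l : ℝ) (x : ℕ → ℝ) :
    Phi p (l • x) = ENNReal.ofReal |l| * Phi p x := by
  simp only [Phi, ENNReal.mul_iSup, seqNorm_smul hp, ENNReal.ofReal_mul (abs_nonneg l)]

lemma ofReal_abs_le_Phi (hp : ∀ n, p n ≠ 0) (x : ℕ → ℝ) (n : ℕ) :
    ENNReal.ofReal |x n| ≤ Phi p x :=
  le_iSup_of_le n (ENNReal.ofReal_le_ofReal (abs_le_seqNorm hp n.le_succ))

lemma Phi_eq_zero_iff (hp : ∀ n, p n ≠ 0) {x : ℕ → ℝ} : Phi p x = 0 ↔ x = 0 := by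
  constructor
  · intro hx
    funext n
    simpa [hx] using ofReal_abs_le_Phi hp x n
  · rintro rfl
    simpa using Phi_smul hp 0 0

end Phi

theorem Phi_is_norm (p : ℕ → ℝ≥0∞) (hp : ∀ n, 1 ≤ p n) :
    (∀ x y : ℕ → ℝ, MemVLp p x → MemVLp p y →
      Phi p (x + y) ≤ Phi p x + Phi p y) ∧
    (∀ (l : ℝ) (x : ℕ → ℝ), MemVLp p x →
      Phi p (l • x) = ENNReal.ofReal |l| * Phi p x) ∧
    (∀ x : ℕ → ℝ, MemVLp p x → (Phi p x = 0 ↔ x = 0)) := by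
  have hp_ne_zero : ∀ n, p n ≠ 0 := fun n => (zero_lt_one.trans_le (hp n)).ne'
  exact ⟨fun x y _ _ => Phi_add_le hp x y, fun l x _ => Phi_smul hp_ne_zero l x,
    fun _ _ => Phi_eq_zero_iff hp_ne_zero⟩
end

section
/- Let q : ℕ → [1,∞] be arbitrary. Then there exists p ∈ [1,∞] such that for every ε > 0 there is a strictly increasing sequence (n_k) of positive integers with the property that the placement map φ — sending y to the sequence with y₁ at coordinate n₁, y_{k+1} at coordinate n_k + 1 for k ≥ 1, and zero elsewhere — satisfies (1+ε)^{-1}·‖y‖_{ℓ^p} ≤ Φ_q(φ(y)) ≤ (1+ε)·‖y‖_{ℓ^p} for every y ∈ ℓ^p (where ‖·‖_{ℓ^∞} is the supremum norm when p = ∞). That is, every space ℓ^{q(·)} contains some classical space ℓ^p almost isometrically. -/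
open scoped ENNReal

open scoped Classical in
/-- The placement map: `(place n y) (n 0) = y 0`, `(place n y) (n k + 1) = y (k+1)`,
and all other coordinates vanish. -/
noncomputable def place (n : ℕ → ℕ) (y : ℕ → ℝ) : ℕ → ℝ := fun j =>
  if j = n 0 then y 0
  else if h : ∃ k, j = n k + 1 then y (h.choose + 1)
  else 0

/-- The classical `ℓ^p` norm for `p ∈ [1,∞]`, valued in `[0,∞]`:
`(∑ₙ |yₙ|^p)^{1/p}` for `p < ∞`, and `supₙ |yₙ|` for `p = ∞`. -/
noncomputable def lpNormE (p : ℝ≥0∞) (y : ℕ → ℝ) : ℝ≥0∞ :=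
  if p = ⊤ then ⨆ n, ENNReal.ofReal |y n|
  else (∑' n, ENNReal.ofReal (|y n| ^ p.toReal)) ^ (1 / p.toReal)


/-!
By compactness of `ℝ≥0∞`, `q (φ j) → p ≥ 1` along a subsequence, so `(q (φ j))⁻¹ → p⁻¹`, and a
further subsequence `n` has `∑ₖ |(q (n k))⁻¹ - p⁻¹| ≤ log₂ (1 + ε)`. The placement map only
inserts zero coordinates, and `t ⊞ 0 = t`, so `Φ_q (place n y)` is the iterated `⊞` of the
`|y k|` with exponents `q (n k)`, while `‖y‖_p` is the one with constant exponent `p`. One step of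
the recursion costs at most the factor `2 ^ |r⁻¹ - p⁻¹|` when `⊞_r` is replaced by `⊞_p`
(monotonicity of power means in one direction, `(a + b)^s ≤ 2^(s-1) (a^s + b^s)` in the other),
and these factors multiply to at most `1 + ε`.
-/

open scoped NNReal

open Filter Topology Finset

lemma Real.rpow_add_rpow_le_two_rpow_mul {p r a b : ℝ} (ha : 0 ≤ a) (hb : 0 ≤ b) (hr : 0 < r)
    (hrp : r ≤ p) :
    (a ^ r + b ^ r) ^ (1 / r) ≤ 2 ^ (1 / r - 1 / p) * (a ^ p + b ^ p) ^ (1 / p) := by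
  lift a to ℝ≥0 using ha
  lift b to ℝ≥0 using hb
  have hp : 0 < p := hr.trans_le hrp
  have hpow : ∀ c : ℝ≥0, (c ^ r) ^ (p / r) = c ^ p := fun c => by
    rw [← NNReal.rpow_mul, mul_div_cancel₀ _ hr.ne']
  have key := NNReal.rpow_add_le_mul_rpow_add_rpow (a ^ r) (b ^ r) ((one_le_div hr).2 hrp)
  rw [hpow, hpow] at key
  have := NNReal.rpow_le_rpow key (one_div_nonneg.2 hp.le)
  rw [← NNReal.rpow_mul, NNReal.mul_rpow, ← NNReal.rpow_mul,
    show p / r * (1 / p) = 1 / r by field_simp,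
    show (p / r - 1) * (1 / p) = 1 / r - 1 / p by field_simp] at this
  exact_mod_cast this

section BoxPlus

variable {p r : ℝ≥0∞} {a b a' b' c : ℝ}

lemma boxPlus_top (a b : ℝ) : boxPlus ∞ a b = max a b := if_pos rfl

lemma boxPlus_of_ne_top (hp : p ≠ ∞) (a b : ℝ) :
    boxPlus p a b = (a ^ p.toReal + b ^ p.toReal) ^ (1 / p.toReal) := if_neg hp

lemma boxPlus_comm_s14 (p : ℝ≥0∞) (a b : ℝ) : boxPlus p a b = boxPlus p b a := by
  unfold boxPlus; rw [max_comm, add_comm]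

lemma boxPlus_nonneg_s14 (ha : 0 ≤ a) (hb : 0 ≤ b) : 0 ≤ boxPlus p a b := by
  unfold boxPlus; split_ifs
  · exact le_max_of_le_left ha
  · positivity

lemma boxPlus_mono (ha : 0 ≤ a) (hb : 0 ≤ b) (haa' : a ≤ a') (hbb' : b ≤ b') :
    boxPlus p a b ≤ boxPlus p a' b' := by
  unfold boxPlus; split_ifs
  · exact max_le_max haa' hbb'
  · gcongr

lemma boxPlus_zero_right (hp : p ≠ 0) (ha : 0 ≤ a) : boxPlus p a 0 = a := by
  by_cases hpT : p = ∞
  · rw [hpT, boxPlus_top, max_eq_left ha]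
  · have hp' := ENNReal.toReal_pos hp hpT
    rw [boxPlus_of_ne_top hpT, Real.zero_rpow hp'.ne', add_zero, ← Real.rpow_mul ha,
      mul_one_div_cancel hp'.ne', Real.rpow_one]

lemma boxPlus_zero_left (hp : p ≠ 0) (hb : 0 ≤ b) : boxPlus p 0 b = b := by
  rw [boxPlus_comm_s14, boxPlus_zero_right hp hb]

lemma le_boxPlus_left_s14 (hp : p ≠ 0) (ha : 0 ≤ a) (hb : 0 ≤ b) : a ≤ boxPlus p a b :=
  (boxPlus_zero_right hp ha).ge.trans (boxPlus_mono ha le_rfl le_rfl hb)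

lemma le_boxPlus_right_s14 (hp : p ≠ 0) (ha : 0 ≤ a) (hb : 0 ≤ b) : b ≤ boxPlus p a b := by
  rw [boxPlus_comm_s14]; exact le_boxPlus_left_s14 hp hb ha

lemma boxPlus_mul (hp : p ≠ 0) (hc : 0 ≤ c) (ha : 0 ≤ a) (hb : 0 ≤ b) :
    boxPlus p (c * a) (c * b) = c * boxPlus p a b := by
  by_cases hpT : p = ∞
  · rw [hpT, boxPlus_top, boxPlus_top, mul_max_of_nonneg _ _ hc]
  · have hp' := ENNReal.toReal_pos hp hpT
    rw [boxPlus_of_ne_top hpT, boxPlus_of_ne_top hpT, Real.mul_rpow hc ha, Real.mul_rpow hc hb,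
      ← mul_add, Real.mul_rpow (by positivity) (by positivity), ← Real.rpow_mul hc,
      mul_one_div_cancel hp'.ne', Real.rpow_one]

lemma boxPlus_mul_left_le (hp : p ≠ 0) (hc : 1 ≤ c) (ha : 0 ≤ a) (hb : 0 ≤ b) :
    boxPlus p (c * a) b ≤ c * boxPlus p a b := by
  rw [← boxPlus_mul hp (zero_le_one.trans hc) ha hb]
  exact boxPlus_mono (by positivity) hb le_rfl (le_mul_of_one_le_left hb hc)

lemma boxPlus_le_boxPlus_of_le (hp : p ≠ 0) (hpr : p ≤ r) (ha : 0 ≤ a) (hb : 0 ≤ b) :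
    boxPlus r a b ≤ boxPlus p a b := by
  by_cases hrT : r = ∞
  · rw [hrT, boxPlus_top]
    exact max_le (le_boxPlus_left_s14 hp ha hb) (le_boxPlus_right_s14 hp ha hb)
  · have hpT : p ≠ ∞ := ne_top_of_le_ne_top hrT hpr
    rw [boxPlus_of_ne_top hpT, boxPlus_of_ne_top hrT]
    exact Real.rpow_add_rpow_le ha hb (ENNReal.toReal_pos hp hpT)
      (ENNReal.toReal_mono hrT hpr)

lemma boxPlus_le_two_rpow_mul_of_le (hr : r ≠ 0) (hrp : r ≤ p) (ha : 0 ≤ a) (hb : 0 ≤ b) :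
    boxPlus r a b ≤ 2 ^ (r⁻¹.toReal - p⁻¹.toReal) * boxPlus p a b := by
  by_cases hrT : r = ∞
  · subst hrT
    rw [top_le_iff.1 hrp, sub_self, Real.rpow_zero, one_mul]
  have hr' := ENNReal.toReal_pos hr hrT
  rw [boxPlus_of_ne_top hrT, ENNReal.toReal_inv, ← one_div]
  by_cases hpT : p = ∞
  · set M := max a b
    have hM : 0 ≤ M := le_max_of_le_left ha
    rw [hpT, boxPlus_top, ENNReal.inv_top, ENNReal.toReal_zero, sub_zero]
    calc (a ^ r.toReal + b ^ r.toReal) ^ (1 / r.toReal)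
        ≤ (M ^ r.toReal + M ^ r.toReal) ^ (1 / r.toReal) := by
          gcongr <;> simp [M]
      _ = 2 ^ (1 / r.toReal) * M := by
          rw [← two_mul, Real.mul_rpow zero_le_two (by positivity), ← Real.rpow_mul hM,
            mul_one_div_cancel hr'.ne', Real.rpow_one]
  · rw [boxPlus_of_ne_top hpT, ENNReal.toReal_inv, ← one_div]
    exact Real.rpow_add_rpow_le_two_rpow_mul ha hb hr' (ENNReal.toReal_mono hpT hrp)

lemma boxPlus_le_two_rpow_abs_mul (hp : p ≠ 0) (hr : r ≠ 0) (ha : 0 ≤ a) (hb : 0 ≤ b) :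
    boxPlus r a b ≤ 2 ^ |r⁻¹.toReal - p⁻¹.toReal| * boxPlus p a b := by
  rcases le_total r p with hrp | hpr
  · have hinv : p⁻¹.toReal ≤ r⁻¹.toReal :=
      ENNReal.toReal_mono (ENNReal.inv_ne_top.2 hr) (ENNReal.inv_le_inv.2 hrp)
    rw [abs_of_nonneg (sub_nonneg.2 hinv)]
    exact boxPlus_le_two_rpow_mul_of_le hr hrp ha hb
  · exact (boxPlus_le_boxPlus_of_le hp hpr ha hb).trans
      (le_mul_of_one_le_left (boxPlus_nonneg_s14 ha hb) (Real.one_le_rpow one_le_two (abs_nonneg _)))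

end BoxPlus

noncomputable def boxPlusFold (e : ℕ → ℝ≥0∞) (x : ℕ → ℝ) : ℕ → ℝ
  | 0 => |x 0|
  | K + 1 => boxPlus (e K) (boxPlusFold e x K) |x (K + 1)|

section BoxPlusFold

variable {e f : ℕ → ℝ≥0∞} {x : ℕ → ℝ}

lemma boxPlusFold_nonneg (e : ℕ → ℝ≥0∞) (x : ℕ → ℝ) : ∀ K, 0 ≤ boxPlusFold e x K
  | 0 => abs_nonneg _
  | K + 1 => boxPlus_nonneg_s14 (boxPlusFold_nonneg e x K) (abs_nonneg _)

lemma boxPlusFold_monotone (he : ∀ k, e k ≠ 0) (x : ℕ → ℝ) : Monotone (boxPlusFold e x) :=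
  monotone_nat_of_le_succ fun K =>
    le_boxPlus_left_s14 (he K) (boxPlusFold_nonneg e x K) (abs_nonneg _)

lemma abs_le_boxPlusFold (he : ∀ k, e k ≠ 0) {i K : ℕ} (hiK : i ≤ K) :
    |x i| ≤ boxPlusFold e x K := by
  refine le_trans ?_ (boxPlusFold_monotone he x hiK)
  cases i with
  | zero => exact le_rfl
  | succ i => exact le_boxPlus_right_s14 (he i) (boxPlusFold_nonneg e x i) (abs_nonneg _)

lemma boxPlusFold_eq_abs_of_eq_zero (he : ∀ k, e k ≠ 0) {a : ℕ} (hx : ∀ j < a, x j = 0) :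
    boxPlusFold e x a = |x a| := by
  induction a with
  | zero => rfl
  | succ a ih =>
    rw [boxPlusFold, ih fun j hj => hx j (by omega), hx a a.lt_succ_self, abs_zero,
      boxPlus_zero_left (he a) (abs_nonneg _)]

lemma boxPlusFold_eq_of_eq_zero (he : ∀ k, e k ≠ 0) {a b : ℕ} (hab : a ≤ b)
    (hx : ∀ j, a < j → j ≤ b → x j = 0) : boxPlusFold e x b = boxPlusFold e x a := by
  induction b, hab using Nat.le_induction with
  | base => rfl
  | succ b hab ih =>
    rw [boxPlusFold, ih fun j h1 h2 => hx j h1 (by omega), hx (b + 1) (by omega) le_rfl,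
      abs_zero, boxPlus_zero_right (he b) (boxPlusFold_nonneg e x a)]

lemma boxPlusFold_le_two_rpow_sum_mul (he : ∀ k, e k ≠ 0) (hf : ∀ k, f k ≠ 0) (x : ℕ → ℝ)
    (K : ℕ) : boxPlusFold e x K ≤
      2 ^ (∑ k ∈ range K, |(e k)⁻¹.toReal - (f k)⁻¹.toReal|) * boxPlusFold f x K := by
  induction K with
  | zero => simp [boxPlusFold]
  | succ K ih =>
    set d := ∑ k ∈ range K, |(e k)⁻¹.toReal - (f k)⁻¹.toReal|
    have hFe := boxPlusFold_nonneg e x K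
    have hFf := boxPlusFold_nonneg f x K
    calc boxPlusFold e x (K + 1)
        ≤ 2 ^ |(e K)⁻¹.toReal - (f K)⁻¹.toReal| * boxPlus (f K) (boxPlusFold e x K) |x (K + 1)| :=
          boxPlus_le_two_rpow_abs_mul (hf K) (he K) hFe (abs_nonneg _)
      _ ≤ 2 ^ |(e K)⁻¹.toReal - (f K)⁻¹.toReal| *
            (2 ^ d * boxPlus (f K) (boxPlusFold f x K) |x (K + 1)|) := by
          gcongr
          exact (boxPlus_mono hFe (abs_nonneg _) ih le_rfl).trans
            (boxPlus_mul_left_le (hf K) (Real.one_le_rpow one_le_two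
              (sum_nonneg fun _ _ => abs_nonneg _)) hFf (abs_nonneg _))
      _ = _ := by
          rw [sum_range_succ, Real.rpow_add two_pos, ← mul_assoc, mul_comm (2 ^ d)]
          rfl

end BoxPlusFold

lemma seqNorm_eq_boxPlusFold (q : ℕ → ℝ≥0∞) (x : ℕ → ℝ) :
    ∀ k, seqNorm q x k = boxPlusFold q x (k + 1)
  | 0 => rfl
  | k + 1 => by rw [seqNorm, seqNorm_eq_boxPlusFold q x k]; rfl

lemma Phi_eq_iSup_boxPlusFold {q : ℕ → ℝ≥0∞} (hq : ∀ m, q m ≠ 0) (x : ℕ → ℝ) :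
    Phi q x = ⨆ K, ENNReal.ofReal (boxPlusFold q x K) := by
  simp only [Phi, seqNorm_eq_boxPlusFold]
  exact (ENNReal.ofReal_mono.comp (boxPlusFold_monotone hq x)).iSup_nat_add 1

section Place

variable {n : ℕ → ℕ} {y : ℕ → ℝ} {j : ℕ}

lemma place_apply_zero (n : ℕ → ℕ) (y : ℕ → ℝ) : place n y (n 0) = y 0 := by
  simp [place]

lemma place_apply_succ (hn : StrictMono n) (y : ℕ → ℝ) (k : ℕ) :
    place n y (n k + 1) = y (k + 1) := by
  have hk : ∃ i, n k + 1 = n i + 1 := ⟨k, rfl⟩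
  have hne : n k + 1 ≠ n 0 := by have := hn.monotone k.zero_le; omega
  rw [place, if_neg hne, dif_pos hk, hn.injective (Nat.succ_injective hk.choose_spec).symm]

lemma place_apply_of_ne (hj0 : j ≠ n 0) (hj : ∀ k, j ≠ n k + 1) : place n y j = 0 := by
  rw [place, if_neg hj0, dif_neg (not_exists.2 hj)]

lemma boxPlusFold_place {q : ℕ → ℝ≥0∞} (hq : ∀ m, q m ≠ 0) (hn : StrictMono n) (y : ℕ → ℝ) :
    ∀ K, boxPlusFold q (place n y) (n K) = boxPlusFold (q ∘ n) y K
  | 0 => by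
    rw [boxPlusFold_eq_abs_of_eq_zero hq, place_apply_zero]
    · rfl
    intro j hj
    refine place_apply_of_ne hj.ne fun k => ?_
    have := hn.monotone k.zero_le; omega
  | K + 1 => by
    rw [boxPlusFold_eq_of_eq_zero hq (hn K.lt_add_one), boxPlusFold, place_apply_succ hn,
      boxPlusFold_place hq hn y K]
    · rfl
    intro j hj hjK
    refine place_apply_of_ne (by have := hn.monotone K.zero_le; omega) fun k hk => ?_
    have h1 : K < k := hn.lt_iff_lt.1 (by omega)
    have h2 : k < K + 1 := hn.lt_iff_lt.1 (by omega)
    omega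

lemma Phi_place {q : ℕ → ℝ≥0∞} (hq : ∀ m, q m ≠ 0) (hn : StrictMono n) (y : ℕ → ℝ) :
    Phi q (place n y) = ⨆ K, ENNReal.ofReal (boxPlusFold (q ∘ n) y K) := by
  have hsub := (ENNReal.ofReal_mono.comp (boxPlusFold_monotone hq (place n y))
    ).iSup_comp_tendsto_atTop hn.tendsto_atTop
  simp only [Function.comp_apply, boxPlusFold_place hq hn] at hsub
  rw [Phi_eq_iSup_boxPlusFold hq, ← hsub]

end Place

section LpNorm

variable {p : ℝ≥0∞}

lemma boxPlusFold_const_rpow (hp : p ≠ 0) (hpT : p ≠ ∞) (y : ℕ → ℝ) (K : ℕ) :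
    boxPlusFold (fun _ => p) y K ^ p.toReal = ∑ i ∈ range (K + 1), |y i| ^ p.toReal := by
  have hp' := (ENNReal.toReal_pos hp hpT).ne'
  induction K with
  | zero => simp [boxPlusFold]
  | succ K ih =>
    rw [boxPlusFold, boxPlus_of_ne_top hpT, one_div, Real.rpow_inv_rpow (by
      have := boxPlusFold_nonneg (fun _ => p) y K; positivity) hp', ih, sum_range_succ _ (K + 1)]

lemma lpNormE_top_eq_iSup_boxPlusFold (y : ℕ → ℝ) :
    lpNormE ∞ y = ⨆ K, ENNReal.ofReal (boxPlusFold (fun _ => ∞) y K) := by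
  rw [lpNormE, if_pos rfl]
  refine le_antisymm (iSup_le fun i => le_iSup_of_le i <| ENNReal.ofReal_le_ofReal <|
    abs_le_boxPlusFold (fun _ => ENNReal.top_ne_zero) le_rfl) (iSup_le fun K => ?_)
  induction K with
  | zero => exact le_iSup_of_le 0 le_rfl
  | succ K ih =>
    rw [boxPlusFold, boxPlus_top, ENNReal.ofReal_max]
    exact max_le ih (le_iSup_of_le (K + 1) le_rfl)

lemma lpNormE_eq_iSup_boxPlusFold (hp : p ≠ 0) (y : ℕ → ℝ) :
    lpNormE p y = ⨆ K, ENNReal.ofReal (boxPlusFold (fun _ => p) y K) := by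
  by_cases hpT : p = ∞
  · subst hpT; exact lpNormE_top_eq_iSup_boxPlusFold y
  have hp' := ENNReal.toReal_pos hp hpT
  have hfold : ∀ K, ENNReal.ofReal (boxPlusFold (fun _ => p) y K) =
      (∑ i ∈ range (K + 1), ENNReal.ofReal (|y i| ^ p.toReal)) ^ (1 / p.toReal) := fun K => by
    rw [← ENNReal.ofReal_sum_of_nonneg fun _ _ => by positivity, ← boxPlusFold_const_rpow hp hpT,
      ENNReal.ofReal_rpow_of_nonneg (by have := boxPlusFold_nonneg (fun _ => p) y K; positivity)
        (by positivity), ← Real.rpow_mul (boxPlusFold_nonneg _ y K), mul_one_div_cancel hp'.ne',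
      Real.rpow_one]
  rw [lpNormE, if_neg hpT, ENNReal.tsum_eq_iSup_nat' (tendsto_add_atTop_nat 1)]
  simp only [hfold]
  exact (ENNReal.orderIsoRpow (1 / p.toReal) (by positivity)).map_iSup _

end LpNorm

lemma iSup_ofReal_le_ofReal_mul_iSup {ι : Sort*} {a b : ι → ℝ} {C : ℝ} (hC : 0 ≤ C)
    (h : ∀ i, a i ≤ C * b i) :
    ⨆ i, ENNReal.ofReal (a i) ≤ ENNReal.ofReal C * ⨆ i, ENNReal.ofReal (b i) := by
  rw [ENNReal.mul_iSup]
  exact iSup_mono fun i => (ENNReal.ofReal_le_ofReal (h i)).trans_eq (ENNReal.ofReal_mul hC)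

lemma iSup_boxPlusFold_le {e f : ℕ → ℝ≥0∞} (he : ∀ k, e k ≠ 0) (hf : ∀ k, f k ≠ 0) {C : ℝ}
    (hC : 1 ≤ C) (hsum : ∀ K, ∑ k ∈ range K, |(e k)⁻¹.toReal - (f k)⁻¹.toReal| ≤ Real.logb 2 C)
    (x : ℕ → ℝ) : ⨆ K, ENNReal.ofReal (boxPlusFold e x K) ≤
      ENNReal.ofReal C * ⨆ K, ENNReal.ofReal (boxPlusFold f x K) := by
  refine iSup_ofReal_le_ofReal_mul_iSup (zero_le_one.trans hC) fun K =>
    (boxPlusFold_le_two_rpow_sum_mul he hf x K).trans ?_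
  gcongr
  · exact boxPlusFold_nonneg f x K
  · calc (2 : ℝ) ^ (∑ k ∈ range K, |(e k)⁻¹.toReal - (f k)⁻¹.toReal|)
        ≤ 2 ^ Real.logb 2 C := Real.rpow_le_rpow_of_exponent_le one_le_two (hsum K)
      _ = C := Real.rpow_logb two_pos (by norm_num) (zero_lt_one.trans_le hC)

theorem Phi_place_almost_isometric {q : ℕ → ℝ≥0∞} {p : ℝ≥0∞} {n : ℕ → ℕ} (hq : ∀ m, q m ≠ 0)
    (hp : p ≠ 0) (hn : StrictMono n) {C : ℝ} (hC : 1 ≤ C)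
    (hsum : ∀ K, ∑ k ∈ range K, |(q (n k))⁻¹.toReal - p⁻¹.toReal| ≤ Real.logb 2 C)
    (y : ℕ → ℝ) :
    (ENNReal.ofReal C)⁻¹ * lpNormE p y ≤ Phi q (place n y) ∧
      Phi q (place n y) ≤ ENNReal.ofReal C * lpNormE p y := by
  rw [Phi_place hq hn, lpNormE_eq_iSup_boxPlusFold hp]
  have hC0 : ENNReal.ofReal C ≠ 0 := ENNReal.ofReal_ne_zero_iff.2 (zero_lt_one.trans_le hC)
  refine ⟨(ENNReal.inv_mul_le_iff hC0 ENNReal.ofReal_ne_top).2 ?_,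
    iSup_boxPlusFold_le (fun k => hq (n k)) (fun _ => hp) hC hsum y⟩
  refine iSup_boxPlusFold_le (fun _ => hp) (fun k => hq (n k)) hC (fun K => ?_) y
  simpa only [abs_sub_comm] using hsum K

lemma exists_strictMono_sum_abs_sub_le {u : ℕ → ℝ} {c : ℝ} (hu : Tendsto u atTop (𝓝 c))
    {δ : ℝ} (hδ : 0 < δ) : ∃ ψ : ℕ → ℕ, StrictMono ψ ∧ ∀ K, ∑ k ∈ range K, |u (ψ k) - c| ≤ δ := by
  have hclose : ∀ k, ∀ᶠ j in atTop, |u j - c| ≤ δ / 2 * (1 / 2) ^ k := fun k =>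
    (Metric.tendsto_nhds.1 hu _ (by positivity)).mono fun j hj => (Real.dist_eq _ _ ▸ hj).le
  obtain ⟨ψ, hψ, hψclose⟩ := extraction_forall_of_eventually hclose
  refine ⟨ψ, hψ, fun K => ?_⟩
  calc ∑ k ∈ range K, |u (ψ k) - c| ≤ ∑ k ∈ range K, δ / 2 * (1 / 2) ^ k :=
        sum_le_sum fun k _ => hψclose k
    _ = δ / 2 * ∑ k ∈ range K, (1 / 2 : ℝ) ^ k := (mul_sum _ _ _).symm
    _ ≤ δ / 2 * 2 := by gcongr; exact sum_geometric_two_le K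
    _ = δ := by ring

/-- Every space `ℓ^{q(·)}` contains some classical space `ℓ^p`, `p ∈ [1,∞]`,
almost isometrically via placement maps. -/
theorem contains_classical_lp (q : ℕ → ℝ≥0∞) (hq : ∀ m, 1 ≤ q m) :
    ∃ p : ℝ≥0∞, 1 ≤ p ∧ ∀ ε : ℝ, 0 < ε →
      ∃ n : ℕ → ℕ, StrictMono n ∧ ∀ y : ℕ → ℝ, lpNormE p y ≠ ⊤ →
        (ENNReal.ofReal (1 + ε))⁻¹ * lpNormE p y ≤ Phi q (place n y) ∧
        Phi q (place n y) ≤ ENNReal.ofReal (1 + ε) * lpNormE p y := by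
  have hq0 : ∀ m, q m ≠ 0 := fun m => (zero_lt_one.trans_le (hq m)).ne'
  obtain ⟨p, φ, hφ, hlim⟩ := CompactSpace.tendsto_subseq q
  have hp : 1 ≤ p := ge_of_tendsto' hlim fun j => hq (φ j)
  have hp0 : p ≠ 0 := (zero_lt_one.trans_le hp).ne'
  have hinv : Tendsto (fun j => (q (φ j))⁻¹.toReal) atTop (𝓝 p⁻¹.toReal) :=
    (ENNReal.tendsto_toReal (ENNReal.inv_ne_top.2 hp0)).comp hlim.inv
  refine ⟨p, hp, fun ε hε => ?_⟩
  obtain ⟨ψ, hψ, hsum⟩ :=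
    exists_strictMono_sum_abs_sub_le hinv (Real.logb_pos one_lt_two (by linarith : 1 < 1 + ε))
  exact ⟨φ ∘ ψ, hφ.comp hψ, fun y _ =>
    Phi_place_almost_isometric hq0 hp0 (hφ.comp hψ) (by linarith) hsum y⟩
end
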